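/- Let ρ(z) = −conj(z) and let τ : S¹ × S¹ × D² → S¹ × S¹ × D² be the involution τ(t,z,w) = (t, conj(z), ρ(w)). Then the quotient topological space of S¹ × S¹ × D² by the equivalence relation identifying a point with its image under τ is homeomorphic to S¹ × D³, the product of the circle with the closed unit ball in ℝ³. -/

import Mathlib

/-!
Only the factor `S¹ × D²` is folded. Radial rescaling turns `D²` into the square `[-1, 1]²`
and commutes with `ρ`, so in square coordinates `(x, y)` the involution reads
`(z, x, y) ↦ (z̄, -x, y)`. Putting `ζ = eˣ z`, this is `ζ ↦ ζ⁻¹` on the annulus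
`e⁻¹ ≤ |ζ| ≤ e`, and the Joukowski map `ζ ↦ (ζ + ζ⁻¹) / 2`, which identifies exactly `ζ`
and `ζ⁻¹`, maps that annulus onto a filled ellipse. So `S¹ × D²` folds onto the solid cylinder
`D² × [-1, 1]`, which is radially homeomorphic to `D³`. Compactness turns the resulting continuous
bijection from the quotient into a homeomorphism.
-/

/-- The unit circle in the complex plane. -/
def S1 : Set ℂ := {z : ℂ | ‖z‖ = 1}

/-- The closed unit disk in the complex plane. -/
def D2 : Set ℂ := {w : ℂ | ‖w‖ ≤ 1}

/-- The involution `τ(t,z,w) = (t, conj z, ρ(w))` of `S¹ × S¹ × D²`, where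
`ρ(w) = −conj w` is reflection in the imaginary axis. -/
def tau (p : ↥(S1 ×ˢ S1 ×ˢ D2)) : ↥(S1 ×ˢ S1 ×ˢ D2) :=
  ⟨(p.val.1, (starRingEnd ℂ) p.val.2.1, -(starRingEnd ℂ) p.val.2.2), by
    obtain ⟨h1, h2, h3⟩ := p.property
    simp only [S1, D2, Set.mem_prod, Set.mem_setOf_eq] at *
    exact ⟨h1, by simp [h2], by simp [h3]⟩⟩

open Function ComplexConjugate Real Metric

namespace ContinuousLinearEquiv

variable {E F : Type*} [NormedAddCommGroup E] [NormedSpace ℝ E]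
  [NormedAddCommGroup F] [NormedSpace ℝ F]

noncomputable def radialHomeomorph (L : E ≃L[ℝ] F) : E ≃ₜ F :=
  (gaugeRescaleHomeomorph (ball 0 1) (L ⁻¹' ball 0 1) (convex_ball 0 1)
    (ball_mem_nhds 0 one_pos) (NormedSpace.isVonNBounded_ball ℝ E 1)
    ((convex_ball 0 1).linear_preimage L.toLinearMap)
    ((isOpen_ball.preimage L.continuous).mem_nhds (by simp))
    (NormedSpace.isVonNBounded_of_isBounded ℝ
      (L.antilipschitz.isBounded_preimage isBounded_ball))).trans L.toHomeomorph

theorem radialHomeomorph_apply (L : E ≃L[ℝ] F) (x : E) :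
    L.radialHomeomorph x = (‖x‖ / ‖L x‖) • L x := by
  have hL : L ⁻¹' ball 0 1 = ((normSeminorm ℝ F).comp L.toLinearMap).ball 0 1 := by
    rw [Seminorm.ball_comp, ball_normSeminorm]; simp
  change L (gaugeRescale (ball 0 1) (L ⁻¹' ball 0 1) x) = _
  rw [gaugeRescale, hL, Seminorm.gauge_ball, gauge_ball zero_le_one, div_one, map_smul]
  rfl

theorem norm_radialHomeomorph (L : E ≃L[ℝ] F) (x : E) : ‖L.radialHomeomorph x‖ = ‖x‖ := by
  rcases eq_or_ne x 0 with rfl | hx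
  · simp [radialHomeomorph_apply]
  have : ‖L x‖ ≠ 0 := by simpa using hx
  rw [radialHomeomorph_apply, norm_smul, Real.norm_of_nonneg (by positivity),
    div_mul_cancel₀ _ this]

end ContinuousLinearEquiv

theorem Quot.nonempty_homeomorph_of_fibers {X Y : Type*} [TopologicalSpace X] [CompactSpace X]
    [TopologicalSpace Y] [T2Space Y] {r : X → X → Prop} {f : X → Y} (hf : Continuous f)
    (hsurj : Surjective f) (hr : ∀ a b, r a b → f a = f b)
    (hfib : ∀ a b, f a = f b → Relation.EqvGen r a b) : Nonempty (Quot r ≃ₜ Y) := by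
  have hinj : Injective (Quot.lift f hr) := by
    rintro ⟨a⟩ ⟨b⟩ h
    exact Quot.eqvGen_sound (hfib a b h)
  exact ⟨(continuous_quot_lift hr hf).homeoOfEquivCompactToT2
    (f := .ofBijective _ ⟨hinj, fun y => (hsurj y).elim fun a h => ⟨Quot.mk r a, h⟩⟩)⟩


theorem Complex.inv_exp_mul {z : ℂ} (hz : ‖z‖ = 1) (x : ℝ) :
    ((Real.exp x : ℂ) * z)⁻¹ = Real.exp (-x) * conj z := by
  rw [mul_inv, Complex.inv_def z, Complex.normSq_eq_norm_sq, hz, Real.exp_neg]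
  push_cast
  ring

theorem Complex.exp_mul_add_inv {z : ℂ} (hz : ‖z‖ = 1) (x : ℝ) :
    (Real.exp x : ℂ) * z + ((Real.exp x : ℂ) * z)⁻¹ =
      2 * ⟨z.re * Real.cosh x, z.im * Real.sinh x⟩ := by
  rw [inv_exp_mul hz]
  apply Complex.ext <;> simp [Real.cosh_eq, Real.sinh_eq, -Complex.ofReal_exp] <;> ring

theorem Complex.eq_of_exp_mul_eq {z z' : ℂ} (hz : ‖z‖ = 1) (hz' : ‖z'‖ = 1) {x x' : ℝ}
    (h : (Real.exp x : ℂ) * z = Real.exp x' * z') : x = x' ∧ z = z' := by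
  have hx : x = x' := by
    simpa [hz, hz', abs_of_pos (exp_pos _)] using congrArg (‖·‖) h
  subst hx
  exact ⟨rfl, mul_left_cancel₀ (by exact_mod_cast (exp_pos x).ne') h⟩

theorem eq_or_eq_inv_of_add_inv_eq_add_inv {K : Type*} [Field K] {a b : K} (ha : a ≠ 0)
    (hb : b ≠ 0) (h : a + a⁻¹ = b + b⁻¹) : b = a ∨ b = a⁻¹ := by
  have : (b - a) * (b * a - 1) = 0 := by
    field_simp at h
    linear_combination (-1 : K) * h
  rcases mul_eq_zero.mp this with h | h
  · exact .inl (sub_eq_zero.mp h)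
  · exact .inr (eq_inv_of_mul_eq_one_left (sub_eq_zero.mp h))

theorem exists_add_inv_eq {K : Type*} [Field K] [IsAlgClosed K] (c : K) :
    ∃ a : K, a ≠ 0 ∧ a + a⁻¹ = c := by
  open Polynomial in
  obtain ⟨a, ha⟩ := IsAlgClosed.exists_root (C 1 * X ^ 2 + C (-c) * X + C 1)
    (by rw [degree_quadratic one_ne_zero]; norm_num)
  simp only [IsRoot, eval_add, eval_mul, eval_C, eval_pow, eval_X] at ha
  have ha0 : a ≠ 0 := by rintro rfl; simp at ha
  refine ⟨a, ha0, ?_⟩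
  field_simp
  linear_combination ha

theorem Real.sinh_one_pos : 0 < sinh 1 := sinh_pos_iff.mpr one_pos

/-- The Joukowski map `ζ ↦ (ζ + ζ⁻¹) / 2` at `ζ = eˣ z`, with the axes rescaled so that the
annulus `|x| ≤ 1` is folded onto the closed unit disc. -/
noncomputable def joukowskiDisk (z : ℂ) (x : ℝ) : ℂ :=
  ⟨z.re * cosh x / cosh 1, z.im * sinh x / sinh 1⟩

theorem joukowskiDisk_conj_neg (z : ℂ) (x : ℝ) :
    joukowskiDisk (conj z) (-x) = joukowskiDisk z x := by
  simp [joukowskiDisk]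

theorem joukowskiDisk_eq_iff {z z' : ℂ} {x x' : ℝ} :
    joukowskiDisk z x = joukowskiDisk z' x' ↔
      (⟨z.re * cosh x, z.im * sinh x⟩ : ℂ) = ⟨z'.re * cosh x', z'.im * sinh x'⟩ := by
  simp only [joukowskiDisk, Complex.ext_iff, div_left_inj' (cosh_pos 1).ne',
    div_left_inj' sinh_one_pos.ne']

theorem eq_or_eq_conj_neg_of_joukowskiDisk_eq {z z' : ℂ} (hz : ‖z‖ = 1) (hz' : ‖z'‖ = 1)
    {x x' : ℝ} (h : joukowskiDisk z' x' = joukowskiDisk z x) :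
    (z' = z ∧ x' = x) ∨ (z' = conj z ∧ x' = -x) := by
  have hne : ∀ {z : ℂ}, ‖z‖ = 1 → ∀ x : ℝ, (Real.exp x : ℂ) * z ≠ 0 := fun hz x => by
    simp [← norm_ne_zero_iff, hz]
  have hsum := Complex.exp_mul_add_inv hz' x'
  rw [joukowskiDisk_eq_iff.mp h, ← Complex.exp_mul_add_inv hz x] at hsum
  rcases eq_or_eq_inv_of_add_inv_eq_add_inv (hne hz x) (hne hz' x') hsum.symm with h | h
  · exact .inl (Complex.eq_of_exp_mul_eq hz' hz h).symm
  · rw [Complex.inv_exp_mul hz] at h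
    obtain ⟨hx, hz⟩ := Complex.eq_of_exp_mul_eq hz' (by simpa using hz) h
    exact .inr ⟨hz, hx⟩

theorem norm_joukowskiDisk_sq_sub_one {z : ℂ} (hz : ‖z‖ = 1) (x : ℝ) :
    ‖joukowskiDisk z x‖ ^ 2 - 1 =
      (cosh x ^ 2 - cosh 1 ^ 2) * ((sinh 1 ^ 2 + z.im ^ 2) / (cosh 1 ^ 2 * sinh 1 ^ 2)) := by
  have h1 : z.re ^ 2 + z.im ^ 2 = 1 := by
    have := congrArg (· ^ 2) hz
    simp only [Complex.sq_norm, Complex.normSq_apply] at this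
    linear_combination this
  rw [Complex.sq_norm, Complex.normSq_apply, joukowskiDisk]
  have := (cosh_pos 1).ne'
  have := sinh_one_pos.ne'
  field_simp
  linear_combination (cosh x ^ 2 * sinh 1 ^ 2) * h1 +
    z.im ^ 2 * (cosh x ^ 2 * cosh_sq 1 - cosh 1 ^ 2 * cosh_sq x)

theorem norm_joukowskiDisk_le_one_iff {z : ℂ} (hz : ‖z‖ = 1) (x : ℝ) :
    ‖joukowskiDisk z x‖ ≤ 1 ↔ |x| ≤ 1 := by
  have hpos : 0 < (sinh 1 ^ 2 + z.im ^ 2) / (cosh 1 ^ 2 * sinh 1 ^ 2) := by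
    have := sinh_one_pos; positivity
  rw [← sq_le_one_iff₀ (norm_nonneg _), ← sub_nonpos, norm_joukowskiDisk_sq_sub_one hz,
    ← zero_mul (_ / _), mul_le_mul_iff_of_pos_right hpos, sub_nonpos,
    sq_le_sq₀ (cosh_pos x).le (cosh_pos 1).le, cosh_le_cosh, abs_one]

theorem joukowskiDisk_one (d : ℂ) : joukowskiDisk d 1 = d := by
  simp [joukowskiDisk, (cosh_pos 1).ne', sinh_one_pos.ne']

theorem exists_joukowskiDisk_eq {d : ℂ} (hd : ‖d‖ ≤ 1) :
    ∃ z x, ‖z‖ = 1 ∧ |x| ≤ 1 ∧ joukowskiDisk z x = d := by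
  obtain ⟨ζ, hζ0, hζ⟩ := exists_add_inv_eq (2 * ⟨d.re * cosh 1, d.im * sinh 1⟩ : ℂ)
  have hnorm : 0 < ‖ζ‖ := norm_pos_iff.mpr hζ0
  set z := ζ / ‖ζ‖
  set x := Real.log ‖ζ‖
  have hz : ‖z‖ = 1 := by simp [z, hnorm.ne']
  have hζz : (Real.exp x : ℂ) * z = ζ := by
    simp only [x, z, Real.exp_log hnorm]
    field_simp [hnorm.ne']
  have hj : joukowskiDisk z x = d := by
    have := Complex.exp_mul_add_inv hz x
    rw [hζz, hζ] at this
    rw [← joukowskiDisk_one d, joukowskiDisk_eq_iff]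
    exact (mul_left_cancel₀ two_ne_zero this).symm
  exact ⟨z, x, hz, (norm_joukowskiDisk_le_one_iff hz x).mp (hj ▸ hd), hj⟩

/-- `ℝ × ℝ` carries the sup norm, so its closed unit ball is the square `[-1, 1]²`. -/
noncomputable def diskToSquare : ℂ ≃ₜ ℝ × ℝ := Complex.equivRealProdCLM.radialHomeomorph

theorem norm_diskToSquare (w : ℂ) : ‖diskToSquare w‖ = ‖w‖ :=
  ContinuousLinearEquiv.norm_radialHomeomorph _ w

theorem diskToSquare_neg_conj (w : ℂ) :
    diskToSquare (-conj w) = (-(diskToSquare w).1, (diskToSquare w).2) := by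
  simp [diskToSquare, ContinuousLinearEquiv.radialHomeomorph_apply, Prod.norm_def]

noncomputable def foldToCylinder (z w : ℂ) : ℂ × ℝ :=
  (joukowskiDisk z (diskToSquare w).1, (diskToSquare w).2)

theorem foldToCylinder_conj_neg_conj (z w : ℂ) :
    foldToCylinder (conj z) (-conj w) = foldToCylinder z w := by
  simp [foldToCylinder, diskToSquare_neg_conj, joukowskiDisk_conj_neg]

theorem norm_foldToCylinder_le_one {z w : ℂ} (hz : ‖z‖ = 1) (hw : ‖w‖ ≤ 1) :
    ‖foldToCylinder z w‖ ≤ 1 := by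
  have hsq : ‖diskToSquare w‖ ≤ 1 := (norm_diskToSquare w).trans_le hw
  refine max_le ?_ ((norm_snd_le (diskToSquare w)).trans hsq)
  exact (norm_joukowskiDisk_le_one_iff hz _).mpr ((norm_fst_le _).trans hsq)

theorem eq_or_eq_of_foldToCylinder_eq {z z' w w' : ℂ} (hz : ‖z‖ = 1) (hz' : ‖z'‖ = 1)
    (h : foldToCylinder z' w' = foldToCylinder z w) :
    (z' = z ∧ w' = w) ∨ (z' = conj z ∧ w' = -conj w) := by
  obtain ⟨hj, hy⟩ := Prod.ext_iff.mp h
  rcases eq_or_eq_conj_neg_of_joukowskiDisk_eq hz hz' hj with ⟨rfl, hx⟩ | ⟨rfl, hx⟩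
  · exact .inl ⟨rfl, diskToSquare.injective (Prod.ext hx hy)⟩
  · refine .inr ⟨rfl, diskToSquare.injective ?_⟩
    rw [diskToSquare_neg_conj]
    exact Prod.ext hx hy

theorem exists_foldToCylinder_eq {v : ℂ × ℝ} (hv : ‖v‖ ≤ 1) :
    ∃ z w, ‖z‖ = 1 ∧ ‖w‖ ≤ 1 ∧ foldToCylinder z w = v := by
  obtain ⟨z, x, hz, hx, hzx⟩ := exists_joukowskiDisk_eq ((norm_fst_le v).trans hv)
  refine ⟨z, diskToSquare.symm (x, v.2), hz, ?_, ?_⟩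
  · rw [← norm_diskToSquare, Homeomorph.apply_symm_apply]
    exact max_le hx ((norm_snd_le v).trans hv)
  · simp [foldToCylinder, hzx]

theorem continuous_joukowskiDisk : Continuous fun p : ℂ × ℝ => joukowskiDisk p.1 p.2 :=
  Complex.equivRealProdCLM.symm.continuous.comp <| .prodMk
    ((Complex.continuous_re.comp continuous_fst).mul (continuous_cosh.comp continuous_snd)
      |>.div_const _)
    ((Complex.continuous_im.comp continuous_fst).mul (continuous_sinh.comp continuous_snd)
      |>.div_const _)

theorem continuous_foldToCylinder : Continuous fun p : ℂ × ℂ => foldToCylinder p.1 p.2 :=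
  have hsq : Continuous fun p : ℂ × ℂ => diskToSquare p.2 := by fun_prop
  .prodMk (continuous_joukowskiDisk.comp (continuous_fst.prodMk (continuous_fst.comp hsq)))
    (continuous_snd.comp hsq)

/-- The closed unit ball of `ℂ × ℝ` is the solid cylinder `D² × [-1, 1]`. -/
noncomputable def cylinderToBall : ℂ × ℝ ≃ₜ EuclideanSpace ℝ (Fin 3) :=
  (ContinuousLinearEquiv.ofFinrankEq (by simp)).radialHomeomorph

theorem norm_cylinderToBall (v : ℂ × ℝ) : ‖cylinderToBall v‖ = ‖v‖ :=
  ContinuousLinearEquiv.norm_radialHomeomorph _ v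

noncomputable def foldToBall (p : ↥(S1 ×ˢ S1 ×ˢ D2)) :
    ↥S1 × ↥(closedBall (0 : EuclideanSpace ℝ (Fin 3)) 1) :=
  (⟨p.1.1, p.2.1⟩, ⟨cylinderToBall (foldToCylinder p.1.2.1 p.1.2.2), by
    rw [mem_closedBall_zero_iff, norm_cylinderToBall]
    exact norm_foldToCylinder_le_one p.2.2.1 p.2.2.2⟩)

theorem continuous_foldToBall : Continuous foldToBall := by
  have hp : Continuous fun p : ↥(S1 ×ˢ S1 ×ˢ D2) => p.1 := continuous_subtype_val
  exact .prodMk (hp.fst.subtype_mk _)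
    ((cylinderToBall.continuous.comp (continuous_foldToCylinder.comp hp.snd)).subtype_mk _)

theorem foldToBall_tau (p : ↥(S1 ×ˢ S1 ×ˢ D2)) : foldToBall (tau p) = foldToBall p := by
  simp only [foldToBall, tau, foldToCylinder_conj_neg_conj]

theorem eq_or_eq_tau_of_foldToBall_eq {p q : ↥(S1 ×ˢ S1 ×ˢ D2)}
    (h : foldToBall p = foldToBall q) : q = p ∨ q = tau p := by
  obtain ⟨ht, hv⟩ := Prod.ext_iff.mp h
  have hfold := cylinderToBall.injective (congrArg Subtype.val hv)
  rcases eq_or_eq_of_foldToCylinder_eq p.2.2.1 q.2.2.1 hfold.symm with ⟨hz, hw⟩ | ⟨hz, hw⟩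
  · exact .inl (Subtype.ext (Prod.ext (congrArg Subtype.val ht).symm (Prod.ext hz hw)))
  · exact .inr (Subtype.ext (Prod.ext (congrArg Subtype.val ht).symm (Prod.ext hz hw)))

theorem foldToBall_surjective : Surjective foldToBall := by
  rintro ⟨t, ⟨v, hv⟩⟩
  obtain ⟨z, w, hz, hw, hzw⟩ := exists_foldToCylinder_eq (v := cylinderToBall.symm v)
    (by rwa [← norm_cylinderToBall, Homeomorph.apply_symm_apply, ← mem_closedBall_zero_iff])
  refine ⟨⟨(t, z, w), t.2, hz, hw⟩, Prod.ext rfl (Subtype.ext ?_)⟩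
  simp [foldToBall, hzw]

theorem isCompact_S1 : IsCompact S1 := by
  simpa [S1, sphere] using isCompact_sphere (0 : ℂ) 1

theorem isCompact_D2 : IsCompact D2 := by
  simpa [D2, closedBall] using isCompact_closedBall (0 : ℂ) 1

/-- The quotient of `S¹ × S¹ × D²` by the identification of each point with its
image under `τ` is homeomorphic to `S¹ × D³`, the product of the circle with the
closed unit ball in `ℝ³`. -/
theorem stmt8 :
    Nonempty (Quot (fun a b => b = tau a) ≃ₜ
      ↥S1 × ↥(Metric.closedBall (0 : EuclideanSpace ℝ (Fin 3)) 1)) := by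
  have : CompactSpace ↥(S1 ×ˢ S1 ×ˢ D2) :=
    isCompact_iff_compactSpace.mp (isCompact_S1.prod (isCompact_S1.prod isCompact_D2))
  refine Quot.nonempty_homeomorph_of_fibers continuous_foldToBall foldToBall_surjective
    (fun p q h => h ▸ (foldToBall_tau p).symm) fun p q h => ?_
  rcases eq_or_eq_tau_of_foldToBall_eq h with rfl | rfl
  exacts [.refl _, .rel _ _ rfl]
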